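/- Every prime p > 3 occurs in a 2-cycle for some shift: for every prime p > 3 there exists a positive integer a such that B_a(p) > p and B_a(B_a(p)) = p. -/

import Mathlib

/-!
Write the prime as `p = 2m + 3` with `m ≥ 1`. Then `n = 3 · 2^m` is composite, exceeds `p`, and
`B n = 3 + 2m = p`; so with the shift `a = n - p`, `B_a` sends `p` to `p + a = n` and `n` back to
`B n = p`.
-/

/-- `B n` is the sum of the prime divisors of `n` counted with multiplicity
(so `B 1 = 0`). -/
def B (n : ℕ) : ℕ := (Nat.primeFactorsList n).sum

/-- `Ba a n = n + a` if `n` is prime, and `B n` otherwise. -/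
def Ba (a n : ℕ) : ℕ := if n.Prime then n + a else B n

theorem B_mul {m n : ℕ} (hm : m ≠ 0) (hn : n ≠ 0) : B (m * n) = B m + B n := by
  rw [B, (Nat.perm_primeFactorsList_mul hm hn).sum_eq, List.sum_append, B, B]

theorem B_prime {p : ℕ} (hp : p.Prime) : B p = p := by
  rw [B, Nat.primeFactorsList_prime hp, List.sum_singleton]

theorem B_prime_pow {p : ℕ} (hp : p.Prime) (k : ℕ) : B (p ^ k) = k * p := by
  rw [B, hp.primeFactorsList_pow, List.sum_replicate, smul_eq_mul]

theorem B_three_mul_two_pow (m : ℕ) : B (3 * 2 ^ m) = 2 * m + 3 := by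
  rw [B_mul (by norm_num) (by positivity), B_prime Nat.prime_three, B_prime_pow Nat.prime_two]
  ring

theorem Ba_of_prime {a n : ℕ} (hn : n.Prime) : Ba a n = n + a := if_pos hn

theorem Ba_of_not_prime {a n : ℕ} (hn : ¬ n.Prime) : Ba a n = B n := if_neg hn

theorem Ba_two_cycle_of_B_eq {p n : ℕ} (hp : p.Prime) (hpn : p < n) (hn : ¬ n.Prime)
    (hBn : B n = p) : Ba (n - p) p = n ∧ Ba (n - p) n = p := by
  refine ⟨?_, by rw [Ba_of_not_prime hn, hBn]⟩
  rw [Ba_of_prime hp]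
  omega

/-- Every prime `p > 3` occurs in a 2-cycle `(p, B_a(p))` for some shift `a`. -/
theorem prime_in_two_cycle (p : ℕ) (hp : p.Prime) (hp3 : 3 < p) :
    ∃ a : ℕ, 0 < a ∧ p < Ba a p ∧ Ba a (Ba a p) = p := by
  obtain ⟨k, rfl⟩ := hp.odd_of_ne_two (by omega)
  set m := k - 1
  have hpm : 2 * k + 1 = 2 * m + 3 := by omega
  have hlt : 2 * m + 3 < 3 * 2 ^ m := by
    have : m < 2 ^ m := Nat.lt_two_pow_self
    have : 1 ≤ 2 ^ m := Nat.one_le_two_pow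
    omega
  have hcomp : ¬ (3 * 2 ^ m).Prime :=
    Nat.not_prime_mul (by norm_num) (Nat.one_lt_two_pow (by omega)).ne'
  obtain ⟨hforth, hback⟩ := Ba_two_cycle_of_B_eq hp (hpm ▸ hlt) hcomp
    (hpm ▸ B_three_mul_two_pow m)
  refine ⟨3 * 2 ^ m - (2 * k + 1), by omega, ?_, ?_⟩
  · rw [hforth]
    omega
  · rw [hforth, hback]
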